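/- Let G be a group with subgroups A ≅ Dih(8) (dihedral of order 8) generated by involutions g₁, g₂ with (g₁g₂)⁴ = 1, and B ≅ Dih(20) generated by involutions g₂, g₃ with (g₂g₃)^{10} = 1. If A ∩ B properly contains ⟨g₂⟩, then (g₂g₃)⁵ ∈ A. -/
import Mathlib


/-- If `A ≅ Dih(8)` is generated by involutions `g₁, g₂` and `B ≅ Dih(20)` is generated by
involutions `g₂, g₃`, and `A ∩ B` properly contains `⟨g₂⟩`, then `(g₂g₃)⁵ ∈ A`. -/
theorem central_involution_mem_of_lt_inter {G : Type*} [Group G] (g₁ g₂ g₃ : G)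
    (h1 : g₁ * g₁ = 1) (h2 : g₂ * g₂ = 1) (h3 : g₃ * g₃ = 1)
    (h1' : g₁ ≠ 1) (h2' : g₂ ≠ 1) (h3' : g₃ ≠ 1)
    (hA : Nat.card (Subgroup.closure {g₁, g₂} : Subgroup G) = 8)
    (h12 : orderOf (g₁ * g₂) = 4)
    (hB : Nat.card (Subgroup.closure {g₂, g₃} : Subgroup G) = 20)
    (h23 : orderOf (g₂ * g₃) = 10)
    (hlt : Subgroup.closure {g₂} <
      Subgroup.closure {g₁, g₂} ⊓ Subgroup.closure {g₂, g₃}) :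
    (g₂ * g₃) ^ 5 ∈ Subgroup.closure ({g₁, g₂} : Set G) := by
  set r := g₂ * g₃ with hr
  set A := Subgroup.closure ({g₁, g₂} : Set G) with hAdef
  set B := Subgroup.closure ({g₂, g₃} : Set G) with hBdef
  have hg2inv : g₂⁻¹ = g₂ := by
    rw [inv_eq_iff_mul_eq_one]; exact h2
  have hg3inv : g₃⁻¹ = g₃ := by
    rw [inv_eq_iff_mul_eq_one]; exact h3
  have cancel : ∀ a : G, g₂ * (g₂ * a) = a := fun a => by
    rw [← mul_assoc, h2, one_mul]
  have hconj : g₂ * r * g₂ = r⁻¹ := by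
    rw [hr, mul_inv_rev, hg2inv, hg3inv]
    simp only [mul_assoc, cancel]
  have hconjn : ∀ n : ℤ, g₂ * r ^ n * g₂ = r ^ (-n) := by
    intro n
    have e1 : g₂ * r ^ n * g₂ = (g₂ * r * g₂) ^ n := by
      conv_rhs => rw [show g₂ * r * g₂ = g₂ * r * g₂⁻¹ by rw [hg2inv]]
      rw [conj_zpow, hg2inv]
    rw [e1, hconj, inv_zpow, zpow_neg]
  set Z := Subgroup.zpowers r with hZdef
  have hZconj : ∀ x ∈ Z, g₂ * x * g₂ ∈ Z := by
    rintro x ⟨n, rfl⟩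
    exact ⟨-n, (hconjn n).symm⟩
  let H : Subgroup G :=
  { carrier := {b | b ∈ Z ∨ g₂ * b ∈ Z}
    one_mem' := Or.inl (one_mem Z)
    mul_mem' := by
      rintro a b (ha | ha) (hb | hb)
      · exact Or.inl (mul_mem ha hb)
      · refine Or.inr ?_
        have h := mul_mem (hZconj a ha) hb
        have e : (g₂ * a * g₂) * (g₂ * b) = g₂ * (a * b) := by
          simp only [mul_assoc, cancel]
        rwa [e] at h
      · refine Or.inr ?_
        have h := mul_mem ha hb
        rwa [mul_assoc] at h
      · refine Or.inl ?_
        have h := mul_mem (hZconj _ ha) hb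
        have e : (g₂ * (g₂ * a) * g₂) * (g₂ * b) = a * b := by
          simp only [mul_assoc, cancel]
        rwa [e] at h
    inv_mem' := by
      rintro a (ha | ha)
      · exact Or.inl (inv_mem ha)
      · refine Or.inr ?_
        have h := hZconj _ (inv_mem ha)
        have e : g₂ * (g₂ * a)⁻¹ * g₂ = g₂ * a⁻¹ := by
          rw [mul_inv_rev, hg2inv]
          simp only [mul_assoc, h2, mul_one]
        rwa [e] at h }
  have hBH : B ≤ H := by
    rw [hBdef, Subgroup.closure_le]
    rintro x (rfl | rfl)
    · exact Or.inr (by rw [h2]; exact one_mem Z)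
    · exact Or.inr ⟨1, by simpa using hr.symm⟩
  have hg2A : g₂ ∈ A := Subgroup.subset_closure (by right; rfl)
  have pow8 : ∀ a ∈ A, a ^ 8 = 1 := by
    intro a ha
    have h := pow_card_eq_one' (G := A) (x := ⟨a, ha⟩)
    rw [hA] at h
    exact_mod_cast congrArg (Subgroup.subtype A) h
  have hr10 : r ^ (10 : ℤ) = 1 := by
    rw [show (10 : ℤ) = ((10 : ℕ) : ℤ) by norm_num, zpow_natCast, ← h23,
      pow_orderOf_eq_one]
  have hz : ∀ n : ℤ, r ^ n ≠ 1 → (r ^ n) ^ 8 = 1 → r ^ n = r ^ (5 : ℤ) := by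
    intro n hne hpow
    have h8 : r ^ (n * 8) = 1 := by
      rw [zpow_mul]; exact_mod_cast hpow
    have hdvd0 : ((10 : ℕ) : ℤ) ∣ n * 8 := by
      rw [← h23]
      exact orderOf_dvd_iff_zpow_eq_one.mpr h8
    have hdvd : (10 : ℤ) ∣ n * 8 := by exact_mod_cast hdvd0
    have h5 : (5 : ℤ) ∣ n := by omega
    obtain ⟨m, rfl⟩ := h5
    rcases Int.even_or_odd m with ⟨k, hk⟩ | ⟨k, hk⟩
    · exfalso
      apply hne
      rw [hk, show (5 : ℤ) * (k + k) = 10 * k by ring, zpow_mul, hr10, one_zpow]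
    · rw [hk, show (5 : ℤ) * (2 * k + 1) = 10 * k + 5 by ring, zpow_add,
        zpow_mul, hr10, one_zpow, one_mul]
  obtain ⟨x, hxAB, hxg⟩ := SetLike.exists_of_lt hlt
  rw [Subgroup.mem_inf] at hxAB
  obtain ⟨hxA, hxB⟩ := hxAB
  have hx1 : x ≠ 1 := fun h => hxg (h ▸ one_mem _)
  have hr5 : (r : G) ^ (5 : ℕ) = r ^ (5 : ℤ) := by
    rw [show (5 : ℤ) = ((5 : ℕ) : ℤ) by norm_num, zpow_natCast]
  rcases hBH hxB with hx | hx
  · obtain ⟨n, rfl⟩ := hx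
    have h := hz n hx1 (pow8 _ hxA)
    rw [hr5, ← h]
    exact hxA
  · obtain ⟨n, hn0⟩ := hx
    have hn : r ^ n = g₂ * x := hn0
    have hne : g₂ * x ≠ 1 := by
      intro h
      apply hxg
      have : x = g₂ := by
        have h' := congrArg (fun y => g₂ * y) h
        simp only [cancel, mul_one] at h'
        exact h'
      rw [this]
      exact Subgroup.subset_closure rfl
    have hmem : g₂ * x ∈ A := mul_mem hg2A hxA
    have h := hz n (by rw [hn]; exact hne) (by rw [hn]; exact pow8 _ hmem)
    rw [hr5, ← h, hn]
    exact hmem
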